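/- arXiv:2206.07735 — 6 statements merged into one kernel-verified Lean document; each statement's English description precedes it below -/
import Mathlib

section
/- Let X be a locally compact Polish space, Y a Hausdorff space, f : X → Y a continuous bijection, and Z = { y ∈ Y : there exists an open neighborhood C of y with the closure of f⁻¹(C) compact }. Then Z with the subspace topology from Y is first countable. -/
/-! A point `y = f x` of `Z` has an open neighbourhood `C` with `K = closure (f ⁻¹' C)` compact.
On `K` the continuous injection `f` into a Hausdorff space is a closed embedding, and
`f '' K ⊇ C` is a neighbourhood of `y`; so the neighbourhood filter of `y` is the image of that
of `x` in `K`, which is countably generated because a Polish space is second countable. -/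

open Topology Filter Set

theorem isCountablyGenerated_nhds_of_image_mem_nhds {X Y : Type*} [TopologicalSpace X]
    [FirstCountableTopology X] [TopologicalSpace Y] [T2Space Y] {f : X → Y} {K : Set X}
    (hK : IsCompact K) (hf : ContinuousOn f K) (hinj : InjOn f K) {x : X} (hx : x ∈ K)
    (hmem : f '' K ∈ 𝓝 (f x)) : (𝓝 (f x)).IsCountablyGenerated := by
  have : CompactSpace K := isCompact_iff_compactSpace.mp hK
  have hemb : IsEmbedding (K.domRestrict f) :=
    (hf.domRestrict.isClosedEmbedding hinj.injective).isEmbedding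
  have hrange : range (K.domRestrict f) = f '' K := range_domRestrict f K
  have hmap : map (K.domRestrict f) (𝓝 ⟨x, hx⟩) = 𝓝 (f x) :=
    hemb.map_nhds_of_mem ⟨x, hx⟩ (hrange ▸ hmem)
  exact hmap ▸ Filter.map.isCountablyGenerated _ _

theorem FirstCountableTopology.of_isCountablyGenerated_nhds {Y : Type*} [TopologicalSpace Y]
    {Z : Set Y} (h : ∀ y ∈ Z, (𝓝 y).IsCountablyGenerated) : FirstCountableTopology Z where
  nhds_generated_countable z := by
    have := h z z.2
    rw [nhds_subtype]
    exact Filter.comap.isCountablyGenerated _ _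

theorem stmt_7_general {X Y : Type*} [TopologicalSpace X] [PolishSpace X]
    [TopologicalSpace Y] [T2Space Y]
    (f : X → Y) (hf : Continuous f) (hbij : Function.Bijective f)
    (Z : Set Y)
    (hZ : Z = {y : Y | ∃ C : Set Y, IsOpen C ∧ y ∈ C ∧ IsCompact (closure (f ⁻¹' C))}) :
    FirstCountableTopology Z := by
  refine FirstCountableTopology.of_isCountablyGenerated_nhds fun y hy => ?_
  obtain ⟨C, hC, hyC, hK⟩ := hZ ▸ hy
  obtain ⟨x, rfl⟩ := hbij.2 y
  have hCK : C ⊆ f '' closure (f ⁻¹' C) :=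
    (image_preimage_eq C hbij.2).symm.subset.trans (image_mono subset_closure)
  exact isCountablyGenerated_nhds_of_image_mem_nhds hK hf.continuousOn hbij.1.injOn
    (subset_closure hyC) (mem_of_superset (hC.mem_nhds hyC) hCK)

theorem stmt_7 {X Y : Type*} [TopologicalSpace X] [PolishSpace X]
    [LocallyCompactSpace X] [TopologicalSpace Y] [T2Space Y]
    (f : X → Y) (hf : Continuous f) (hbij : Function.Bijective f)
    (Z : Set Y)
    (hZ : Z = {y : Y | ∃ C : Set Y, IsOpen C ∧ y ∈ C ∧ IsCompact (closure (f ⁻¹' C))}) :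
    FirstCountableTopology Z :=
  stmt_7_general f hf hbij Z hZ
end

section
/- Let X be a locally compact Polish space, Y a Hausdorff space, f : X → Y a continuous bijection, and Z = { y ∈ Y : there exists an open neighborhood C of y with the closure of f⁻¹(C) compact }. Then the restriction of f to W := f⁻¹(Z) is a homeomorphism from W (with subspace topology of X) onto Z (with subspace topology of Y), and Z with this topology is a locally compact Polish space. -/
/-!
Around a point of `Z`, with witness `C`, the map `f` restricted to the compact set
`K = closure (f ⁻¹' C)` is a closed map into the Hausdorff space `Y`. Hence for `S` open in `X`
the set `C ∩ f '' S = C \ f '' (K \ S)` is open, so `f` maps open subsets of `W` to open subsets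
of `Z`, and the continuous bijection `W → Z` is a homeomorphism. Since `Z` is open, `W` is an open
subset of `X`, hence locally compact and Polish, and so is `Z`.
-/

open Set Function Topology

theorem inter_image_eq_diff_image_closure_preimage_diff {X Y : Type*} [TopologicalSpace X]
    {f : X → Y} (hbij : Bijective f) (C : Set Y) (S : Set X) :
    C ∩ f '' S = C \ f '' (closure (f ⁻¹' C) \ S) := by
  ext y
  obtain ⟨x, rfl⟩ := hbij.2 y
  simp only [mem_inter_iff, mem_sdiff, hbij.1.mem_set_image]
  have : f x ∈ C → x ∈ closure (f ⁻¹' C) := fun h => subset_closure h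
  tauto

section

variable {X Y : Type*} [TopologicalSpace X] [TopologicalSpace Y]

def compactPreimageLocus (f : X → Y) : Set Y :=
  {y | ∃ C : Set Y, IsOpen C ∧ y ∈ C ∧ IsCompact (closure (f ⁻¹' C))}

theorem isOpen_compactPreimageLocus (f : X → Y) : IsOpen (compactPreimageLocus f) :=
  isOpen_iff_forall_mem_open.2 fun _ ⟨C, hC, hyC, hK⟩ =>
    ⟨C, fun _ hc => ⟨C, hC, hc, hK⟩, hC, hyC⟩

theorem isOpen_inter_image_of_isCompact_closure_preimage [T2Space Y] {f : X → Y}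
    (hf : Continuous f) (hbij : Bijective f) {C : Set Y} (hC : IsOpen C)
    (hK : IsCompact (closure (f ⁻¹' C))) {S : Set X} (hS : IsOpen S) :
    IsOpen (C ∩ f '' S) := by
  rw [inter_image_eq_diff_image_closure_preimage_diff hbij]
  exact hC.sdiff ((hK.diff hS).image hf).isClosed

theorem isOpen_image_inter_compactPreimageLocus [T2Space Y] {f : X → Y} (hf : Continuous f)
    (hbij : Bijective f) {S : Set X} (hS : IsOpen S) :
    IsOpen (f '' S ∩ compactPreimageLocus f) := by
  refine isOpen_iff_forall_mem_open.2 fun y ⟨hyS, C, hC, hyC, hK⟩ =>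
    ⟨C ∩ f '' S, fun z ⟨hzC, hzS⟩ => ⟨hzS, C, hC, hzC, hK⟩,
      isOpen_inter_image_of_isCompact_closure_preimage hf hbij hC hK hS, hyC, hyS⟩

theorem isOpenMap_restrictPreimage_compactPreimageLocus [T2Space Y] {f : X → Y}
    (hf : Continuous f) (hbij : Bijective f) :
    IsOpenMap ((compactPreimageLocus f).restrictPreimage f) := by
  rintro _ ⟨S, hS, rfl⟩
  rw [image_restrictPreimage, ← Subtype.preimage_coe_inter_self]
  exact (isOpen_image_inter_compactPreimageLocus hf hbij hS).preimage continuous_subtype_val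

theorem isHomeomorph_restrictPreimage_compactPreimageLocus [T2Space Y] {f : X → Y}
    (hf : Continuous f) (hbij : Bijective f) :
    IsHomeomorph ((compactPreimageLocus f).restrictPreimage f) :=
  ⟨hf.restrictPreimage, isOpenMap_restrictPreimage_compactPreimageLocus hf hbij,
    restrictPreimage_bijective _ hbij⟩

end

theorem stmt_8 {X Y : Type*} [TopologicalSpace X] [PolishSpace X]
    [LocallyCompactSpace X] [TopologicalSpace Y] [T2Space Y]
    (f : X → Y) (hf : Continuous f) (hbij : Function.Bijective f)
    (Z : Set Y)
    (hZ : Z = {y : Y | ∃ C : Set Y, IsOpen C ∧ y ∈ C ∧ IsCompact (closure (f ⁻¹' C))}) :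
    (∃ h : (f ⁻¹' Z) ≃ₜ Z, ∀ x : f ⁻¹' Z, (h x : Y) = f x) ∧
      PolishSpace Z ∧ LocallyCompactSpace Z := by
  obtain rfl : Z = compactPreimageLocus f := hZ
  let h := (isHomeomorph_restrictPreimage_compactPreimageLocus hf hbij).homeomorph
  have hW : IsOpen (f ⁻¹' compactPreimageLocus f) := (isOpen_compactPreimageLocus f).preimage hf
  have : PolishSpace (f ⁻¹' compactPreimageLocus f) := hW.polishSpace
  have : LocallyCompactSpace (f ⁻¹' compactPreimageLocus f) := hW.locallyCompactSpace
  exact ⟨⟨h, fun _ => rfl⟩, h.symm.isClosedEmbedding.polishSpace,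
    h.symm.isOpenEmbedding.locallyCompactSpace⟩
end

section
/- Let X be a locally compact Polish space, Y a Hausdorff space, f : X → Y a continuous bijection, and Z as above. Then Y₁ := Y \ Z, with the subspace topology, is the continuous bijective image of a locally compact Polish space; namely X₁ := f⁻¹(Y₁), with the subspace topology of X, is a locally compact Polish space and the restriction of f to X₁ is a continuous bijection onto Y₁. -/
/-! `Z` is a union of open sets, so `X₁ = f⁻¹(Y \ Z)` is closed in `X` and therefore inherits
local compactness and the Polish property. -/

theorem isOpen_setOf_exists_isOpen_mem {Y : Type*} [TopologicalSpace Y] (P : Set Y → Prop) :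
    IsOpen {y : Y | ∃ C : Set Y, IsOpen C ∧ y ∈ C ∧ P C} :=
  isOpen_iff_forall_mem_open.mpr fun _ ⟨C, hC, hyC, hP⟩ =>
    ⟨C, fun _ hy' => ⟨C, hC, hy', hP⟩, hC, hyC⟩

theorem stmt_9_general {X Y : Type*} [TopologicalSpace X] [PolishSpace X]
    [LocallyCompactSpace X] [TopologicalSpace Y]
    (f : X → Y) (hf : Continuous f) (hbij : Function.Bijective f)
    (Z : Set Y)
    (hZ : Z = {y : Y | ∃ C : Set Y, IsOpen C ∧ y ∈ C ∧ IsCompact (closure (f ⁻¹' C))}) :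
    PolishSpace (f ⁻¹' Zᶜ) ∧ LocallyCompactSpace (f ⁻¹' Zᶜ) ∧
      ∃ g : (f ⁻¹' Zᶜ) → (Zᶜ : Set Y), (∀ x : f ⁻¹' Zᶜ, (g x : Y) = f x) ∧
        Continuous g ∧ Function.Bijective g := by
  have hZ_open : IsOpen Z := hZ ▸ isOpen_setOf_exists_isOpen_mem _
  have hX₁_closed : IsClosed (f ⁻¹' Zᶜ) := hZ_open.isClosed_compl.preimage hf
  exact ⟨hX₁_closed.polishSpace, hX₁_closed.locallyCompactSpace, Zᶜ.restrictPreimage f,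
    fun _ => rfl, hf.restrictPreimage, hbij.restrictPreimage _⟩

theorem stmt_9 {X Y : Type*} [TopologicalSpace X] [PolishSpace X]
    [LocallyCompactSpace X] [TopologicalSpace Y] [T2Space Y]
    (f : X → Y) (hf : Continuous f) (hbij : Function.Bijective f)
    (Z : Set Y)
    (hZ : Z = {y : Y | ∃ C : Set Y, IsOpen C ∧ y ∈ C ∧ IsCompact (closure (f ⁻¹' C))}) :
    PolishSpace (f ⁻¹' Zᶜ) ∧ LocallyCompactSpace (f ⁻¹' Zᶜ) ∧
      ∃ g : (f ⁻¹' Zᶜ) → (Zᶜ : Set Y), (∀ x : f ⁻¹' Zᶜ, (g x : Y) = f x) ∧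
        Continuous g ∧ Function.Bijective g :=
  stmt_9_general f hf hbij Z hZ
end

section
/- Let (X,d) be a complete metric space with compact exhaustion (K_n) (K_n compact, K_n contained in the interior of K_{n+1}, union equal to X), let (r_n) be a strictly decreasing positive sequence tending to 0 with the r_n-neighborhood of K_n contained in K_{n+1}, let x₀ ∈ K_1, g(x) = max_n (r_n − d(x,K_n)), h(x) = min(d(x,x₀), g(x)), and δ(x,y) = min(d(x,y), h(x)+h(y)). Then the metric space (X,δ) is totally bounded. -/
open Filter Topology

theorem stmt_17 {X : Type*} [MetricSpace X] [CompleteSpace X]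
    (K : ℕ → Set X) (hKc : ∀ n, IsCompact (K n))
    (hKmono : ∀ n, K n ⊆ interior (K (n + 1))) (hKunion : (⋃ n, K n) = Set.univ)
    (r : ℕ → ℝ) (hr : StrictAnti r) (hrpos : ∀ n, 0 < r n)
    (hrlim : Tendsto r atTop (𝓝 0))
    (hnbhd : ∀ n, {x : X | ∃ v ∈ K n, dist x v < r n} ⊆ K (n + 1))
    (x₀ : X) (hx₀ : x₀ ∈ K 0)
    (g : X → ℝ)
    (hg : ∀ x : X, ∃ n : ℕ, g x = r n - Metric.infDist x (K n) ∧
      ∀ m : ℕ, r m - Metric.infDist x (K m) ≤ g x)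
    (h : X → ℝ) (hh : ∀ x, h x = min (dist x x₀) (g x))
    (δ : X → X → ℝ) (hδ : ∀ x y, δ x y = min (dist x y) (h x + h y)) :
    ∀ ε : ℝ, 0 < ε → ∃ D : Finset X, ∀ x : X, ∃ y ∈ D, δ x y < ε := by
  intro ε hε
  have hmono : ∀ m n : ℕ, m ≤ n → K m ⊆ K n := by
    intro m n hmn
    induction n, hmn using Nat.le_induction with
    | base => exact subset_rfl
    | succ n hmn ih => exact ih.trans ((hKmono n).trans interior_subset)
  have hKne : ∀ n, (K n).Nonempty := fun n => ⟨x₀, hmono 0 n (Nat.zero_le n) hx₀⟩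
  have hgx0 : 0 ≤ g x₀ := by
    obtain ⟨n, _, hle⟩ := hg x₀
    have h0 : Metric.infDist x₀ (K 0) = 0 := Metric.infDist_zero_of_mem hx₀
    have := hle 0
    linarith [hrpos 0]
  have hhx0 : h x₀ = 0 := by
    rw [hh]; simp [hgx0]
  obtain ⟨N, hN⟩ := (hrlim.eventually_lt_const hε).exists
  obtain ⟨t, htf, htcov⟩ := (Metric.totallyBounded_iff.mp (hKc N).totallyBounded) ε hε
  classical
  refine ⟨insert x₀ htf.toFinset, fun x => ?_⟩
  by_cases hx : h x < ε
  · refine ⟨x₀, Finset.mem_insert_self _ _, ?_⟩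
    rw [hδ]
    calc min (dist x x₀) (h x + h x₀) ≤ h x + h x₀ := min_le_right _ _
    _ < ε := by rw [hhx0]; linarith
  · push_neg at hx
    have hgx : ε ≤ g x := le_trans hx (by rw [hh]; exact min_le_right _ _)
    obtain ⟨n, hgn, _⟩ := hg x
    have hinfnn : 0 ≤ Metric.infDist x (K n) := Metric.infDist_nonneg
    have hrn : ε ≤ r n := by rw [hgn] at hgx; linarith
    have hnN : n < N := by
      by_contra hc
      push_neg at hc
      have := hr.antitone hc
      linarith
    have hinf : Metric.infDist x (K n) < r n := by
      have : 0 < g x := lt_of_lt_of_le hε hgx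
      rw [hgn] at this; linarith
    obtain ⟨v, hv, hdv⟩ := (Metric.infDist_lt_iff (hKne n)).mp hinf
    have hxK : x ∈ K N := hmono (n + 1) N hnN (hnbhd n ⟨v, hv, hdv⟩)
    obtain ⟨y, hy, hxy⟩ := Set.mem_iUnion₂.mp (htcov hxK)
    refine ⟨y, Finset.mem_insert_of_mem (htf.mem_toFinset.mpr hy), ?_⟩
    rw [hδ]
    exact lt_of_le_of_lt (min_le_left _ _) (by simpa [Metric.mem_ball] using hxy)
end

section
/- With X, d, (K_n), (r_n), x₀, g, h, δ as above (X a noncompact locally compact complete separable metric space with compact exhaustion), the metric space (X,δ) is complete, and hence compact; in particular every sequence that eventually leaves every compact subset of (X,d) converges to x₀ in (X,δ). -/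
/-!
Since `δ ≤ d`, a sequence returning infinitely often to some compact `K m` has a δ-convergent
subsequence. Along a sequence that eventually leaves every `K m`, `g` tends to `0`: for a point
outside `K N`, each term `r n - d(x, K n)` with `n < N` is nonpositive because the
`r n`-neighbourhood of `K n` lies in `K (n + 1) ⊆ K N`, and the terms with `n ≥ N` are at most
`r n → 0`. Hence `δ(u n, x₀) ≤ h (u n) ≤ g (u n) → 0`. So `(X, δ)` is sequentially compact, and a
Cauchy sequence with a convergent subsequence converges; the triangle inequality for `δ` comes from
`h` being nonnegative and `1`-Lipschitz.
-/

open Filter Topology Metric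

lemma exists_tendsto_subseq_or_eventually_notMem {X : Type*} [TopologicalSpace X]
    [FirstCountableTopology X] {K : ℕ → Set X} (hKc : ∀ n, IsCompact (K n)) (u : ℕ → X) :
    (∃ (x : X) (φ : ℕ → ℕ), StrictMono φ ∧ Tendsto (u ∘ φ) atTop (𝓝 x)) ∨
      ∀ m, ∀ᶠ n in atTop, u n ∉ K m := by
  refine or_iff_not_imp_right.2 fun hu => ?_
  simp only [not_forall, not_eventually, not_not] at hu
  obtain ⟨m, hm⟩ := hu
  obtain ⟨φ, hφ, hφK⟩ := extraction_of_frequently_atTop hm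
  obtain ⟨x, -, ψ, hψ, hx⟩ := (hKc m).tendsto_subseq hφK
  exact ⟨x, φ ∘ ψ, hφ.comp hψ, hx⟩

lemma tendsto_of_cauchy_of_tendsto_subseq {α : Type*} {f : α → α → ℝ}
    (hf0 : ∀ x y, 0 ≤ f x y) (hf : ∀ x y z, f x z ≤ f x y + f y z) {u : ℕ → α}
    (hu : ∀ ε : ℝ, 0 < ε → ∃ N : ℕ, ∀ m ≥ N, ∀ n ≥ N, f (u m) (u n) < ε)
    {φ : ℕ → ℕ} (hφ : StrictMono φ) {x : α}
    (hux : Tendsto (fun n => f (u (φ n)) x) atTop (𝓝 0)) :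
    Tendsto (fun n => f (u n) x) atTop (𝓝 0) := by
  have hclose : Tendsto (fun n => f (u n) (u (φ n))) atTop (𝓝 0) := by
    refine Metric.tendsto_atTop.2 fun ε hε => ?_
    obtain ⟨N, hN⟩ := hu ε hε
    refine ⟨N, fun n hn => ?_⟩
    rw [Real.dist_0_eq_abs, abs_of_nonneg (hf0 _ _)]
    exact hN n hn (φ n) (hn.trans hφ.le_apply)
  exact squeeze_zero (fun n => hf0 _ _) (fun n => hf _ (u (φ n)) _)
    (by simpa using hclose.add hux)

section TruncDist

variable {X : Type*} [PseudoMetricSpace X] {h : X → ℝ}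

def truncDist (h : X → ℝ) (x y : X) : ℝ := min (dist x y) (h x + h y)

lemma truncDist_le_dist (x y : X) : truncDist h x y ≤ dist x y := min_le_left _ _

lemma truncDist_le_add (x y : X) : truncDist h x y ≤ h x + h y := min_le_right _ _

lemma truncDist_nonneg (h0 : ∀ x, 0 ≤ h x) (x y : X) : 0 ≤ truncDist h x y :=
  le_min dist_nonneg (add_nonneg (h0 x) (h0 y))

lemma truncDist_triangle (h0 : ∀ x, 0 ≤ h x) (hL : LipschitzWith 1 h) (x y z : X) :
    truncDist h x z ≤ truncDist h x y + truncDist h y z := by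
  have hx := hL.le_add_mul x y
  have hz := hL.le_add_mul z y
  simp only [NNReal.coe_one, one_mul] at hx hz
  have := dist_triangle x y z
  have := dist_comm z y
  have := h0 y
  simp only [truncDist, min_def]
  split_ifs <;> linarith

lemma tendsto_truncDist_of_tendsto {ι : Type*} {l : Filter ι} (h0 : ∀ x, 0 ≤ h x) {v : ι → X}
    {x : X} (hv : Tendsto v l (𝓝 x)) : Tendsto (fun n => truncDist h (v n) x) l (𝓝 0) :=
  squeeze_zero (fun _ => truncDist_nonneg h0 _ _) (fun _ => truncDist_le_dist _ _)
    (tendsto_iff_dist_tendsto_zero.1 hv)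

lemma tendsto_truncDist_of_tendsto_zero {ι : Type*} {l : Filter ι} (h0 : ∀ x, 0 ≤ h x) {v : ι → X}
    {x₀ : X} (hx₀ : h x₀ = 0) (hv : Tendsto (h ∘ v) l (𝓝 0)) :
    Tendsto (fun n => truncDist h (v n) x₀) l (𝓝 0) :=
  squeeze_zero (fun _ => truncDist_nonneg h0 _ _)
    (fun _ => (truncDist_le_add _ _).trans_eq (by rw [hx₀, add_zero]; rfl)) hv

end TruncDist

section Exhaustion

variable {X : Type*} [PseudoMetricSpace X] {K : ℕ → Set X} {r : ℕ → ℝ} {g : X → ℝ}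

lemma le_infDist_of_thickening_subset {s t : Set X} {ρ : ℝ} {x : X} (hs : s.Nonempty)
    (hst : thickening ρ s ⊆ t) (hx : x ∉ t) : ρ ≤ infDist x s :=
  not_lt.1 fun hlt => hx (hst ((mem_thickening_iff_infDist_lt hs).2 hlt))

lemma monotone_of_thickening_subset (hr : ∀ n, 0 < r n)
    (hK : ∀ n, thickening (r n) (K n) ⊆ K (n + 1)) : Monotone K :=
  monotone_nat_of_le_succ fun n => (self_subset_thickening (hr n) _).trans (hK n)

lemma apply_pos_of_iUnion_eq_univ (hKunion : ⋃ n, K n = Set.univ) (hr : ∀ n, 0 < r n)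
    (hg_le : ∀ x m, r m - infDist x (K m) ≤ g x) (x : X) : 0 < g x := by
  obtain ⟨m, hm⟩ := Set.mem_iUnion.1 (hKunion.symm ▸ Set.mem_univ x)
  have hgm := hg_le x m
  rw [infDist_zero_of_mem hm, sub_zero] at hgm
  exact (hr m).trans_le hgm

lemma lipschitzWith_one_of_isGreatest (hg_eq : ∀ x, ∃ n, g x = r n - infDist x (K n))
    (hg_le : ∀ x m, r m - infDist x (K m) ≤ g x) : LipschitzWith 1 g :=
  LipschitzWith.of_le_add fun x y => by
    obtain ⟨n, hn⟩ := hg_eq x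
    linarith [hg_le y n, infDist_le_infDist_add_dist (s := K n) (x := y) (y := x), dist_comm x y]

lemma apply_lt_of_notMem (hne : ∀ n, (K n).Nonempty) (hr : ∀ n, 0 < r n)
    (hK : ∀ n, thickening (r n) (K n) ⊆ K (n + 1))
    (hg_eq : ∀ x, ∃ n, g x = r n - infDist x (K n)) {N : ℕ} {ε : ℝ} (hε : 0 < ε)
    (hrN : ∀ n ≥ N, r n < ε) {x : X} (hx : x ∉ K N) : g x < ε := by
  obtain ⟨n, hn⟩ := hg_eq x
  rw [hn]
  rcases lt_or_ge n N with hnN | hnN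
  · have hx' : x ∉ K (n + 1) := fun hx' => hx (monotone_of_thickening_subset hr hK hnN hx')
    linarith [le_infDist_of_thickening_subset (hne n) (hK n) hx']
  · linarith [hrN n hnN, infDist_nonneg (x := x) (s := K n)]

lemma tendsto_zero_of_eventually_notMem (hne : ∀ n, (K n).Nonempty) (hr : ∀ n, 0 < r n)
    (hK : ∀ n, thickening (r n) (K n) ⊆ K (n + 1)) (hrlim : Tendsto r atTop (𝓝 0))
    (hg_pos : ∀ x, 0 < g x) (hg_eq : ∀ x, ∃ n, g x = r n - infDist x (K n)) {u : ℕ → X}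
    (hu : ∀ m, ∀ᶠ n in atTop, u n ∉ K m) : Tendsto (g ∘ u) atTop (𝓝 0) := by
  refine tendsto_order.2 ⟨fun a ha => .of_forall fun n => ha.trans (hg_pos _), fun ε hε => ?_⟩
  obtain ⟨N, hN⟩ := eventually_atTop.1 (hrlim.eventually (gt_mem_nhds hε))
  filter_upwards [hu N] with n hn using apply_lt_of_notMem hne hr hK hg_eq hε hN hn

end Exhaustion

theorem stmt_18_general {X : Type*} [MetricSpace X]
    (K : ℕ → Set X) (hKc : ∀ n, IsCompact (K n))
    (hKunion : (⋃ n, K n) = Set.univ)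
    (r : ℕ → ℝ) (hrpos : ∀ n, 0 < r n)
    (hrlim : Tendsto r atTop (𝓝 0))
    (hnbhd : ∀ n, {x : X | ∃ v ∈ K n, dist x v < r n} ⊆ K (n + 1))
    (x₀ : X) (hx₀ : x₀ ∈ K 0)
    (g : X → ℝ)
    (hg : ∀ x : X, ∃ n : ℕ, g x = r n - Metric.infDist x (K n) ∧
      ∀ m : ℕ, r m - Metric.infDist x (K m) ≤ g x)
    (h : X → ℝ) (hh : ∀ x, h x = min (dist x x₀) (g x))
    (δ : X → X → ℝ) (hδ : ∀ x y, δ x y = min (dist x y) (h x + h y)) :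
    (∀ u : ℕ → X,
        (∀ ε : ℝ, 0 < ε → ∃ N : ℕ, ∀ m ≥ N, ∀ n ≥ N, δ (u m) (u n) < ε) →
        ∃ x : X, Tendsto (fun n => δ (u n) x) atTop (𝓝 0)) ∧
    (∀ u : ℕ → X, ∃ x : X, ∃ φ : ℕ → ℕ, StrictMono φ ∧
        Tendsto (fun n => δ (u (φ n)) x) atTop (𝓝 0)) ∧
    (∀ u : ℕ → X, (∀ C : Set X, IsCompact C → ∀ᶠ n in atTop, u n ∉ C) →
        Tendsto (fun n => δ (u n) x₀) atTop (𝓝 0)) := by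
  have hK : ∀ n, thickening (r n) (K n) ⊆ K (n + 1) := fun n x hx =>
    hnbhd n (mem_thickening_iff.1 hx)
  have hne : ∀ n, (K n).Nonempty := fun n =>
    ⟨x₀, monotone_of_thickening_subset hrpos hK (Nat.zero_le n) hx₀⟩
  have hg_eq : ∀ x, ∃ n, g x = r n - infDist x (K n) := fun x => (hg x).imp fun _ => And.left
  have hg_le : ∀ x m, r m - infDist x (K m) ≤ g x := fun x => (hg x).elim fun _ => And.right
  have hg_pos := apply_pos_of_iUnion_eq_univ hKunion hrpos hg_le
  have h0 : ∀ x, 0 ≤ h x := fun x => hh x ▸ le_min dist_nonneg (hg_pos x).le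
  have hL : LipschitzWith 1 h := by
    simpa [← funext hh] using
      (LipschitzWith.dist_left x₀).min (lipschitzWith_one_of_isGreatest hg_eq hg_le)
  have hhx₀ : h x₀ = 0 := by rw [hh, dist_self, min_eq_left (hg_pos x₀).le]
  obtain rfl : δ = truncDist h := funext₂ hδ
  have hleave (u : ℕ → X) (hu : ∀ m, ∀ᶠ n in atTop, u n ∉ K m) :
      Tendsto (fun n => truncDist h (u n) x₀) atTop (𝓝 0) :=
    tendsto_truncDist_of_tendsto_zero h0 hhx₀ <|
      squeeze_zero (fun _ => h0 _) (fun n => (hh (u n)).trans_le (min_le_right _ _))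
        (tendsto_zero_of_eventually_notMem hne hrpos hK hrlim hg_pos hg_eq hu)
  have hsubseq (u : ℕ → X) : ∃ x : X, ∃ φ : ℕ → ℕ, StrictMono φ ∧
      Tendsto (fun n => truncDist h (u (φ n)) x) atTop (𝓝 0) := by
    rcases exists_tendsto_subseq_or_eventually_notMem hKc u with ⟨x, φ, hφ, hx⟩ | hu
    · exact ⟨x, φ, hφ, tendsto_truncDist_of_tendsto h0 hx⟩
    · exact ⟨x₀, id, strictMono_id, hleave u hu⟩
  refine ⟨fun u hu => ?_, hsubseq, fun u hu => hleave u fun m => hu _ (hKc m)⟩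
  obtain ⟨x, φ, hφ, hx⟩ := hsubseq u
  exact ⟨x, tendsto_of_cauchy_of_tendsto_subseq (truncDist_nonneg h0) (truncDist_triangle h0 hL)
    hu hφ hx⟩

theorem stmt_18 {X : Type*} [MetricSpace X] [CompleteSpace X]
    [TopologicalSpace.SeparableSpace X] [LocallyCompactSpace X] [NoncompactSpace X]
    (K : ℕ → Set X) (hKc : ∀ n, IsCompact (K n))
    (hKmono : ∀ n, K n ⊆ interior (K (n + 1))) (hKunion : (⋃ n, K n) = Set.univ)
    (r : ℕ → ℝ) (hr : StrictAnti r) (hrpos : ∀ n, 0 < r n)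
    (hrlim : Tendsto r atTop (𝓝 0))
    (hnbhd : ∀ n, {x : X | ∃ v ∈ K n, dist x v < r n} ⊆ K (n + 1))
    (x₀ : X) (hx₀ : x₀ ∈ K 0)
    (g : X → ℝ)
    (hg : ∀ x : X, ∃ n : ℕ, g x = r n - Metric.infDist x (K n) ∧
      ∀ m : ℕ, r m - Metric.infDist x (K m) ≤ g x)
    (h : X → ℝ) (hh : ∀ x, h x = min (dist x x₀) (g x))
    (δ : X → X → ℝ) (hδ : ∀ x y, δ x y = min (dist x y) (h x + h y)) :
    (∀ u : ℕ → X,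
        (∀ ε : ℝ, 0 < ε → ∃ N : ℕ, ∀ m ≥ N, ∀ n ≥ N, δ (u m) (u n) < ε) →
        ∃ x : X, Tendsto (fun n => δ (u n) x) atTop (𝓝 0)) ∧
    (∀ u : ℕ → X, ∃ x : X, ∃ φ : ℕ → ℕ, StrictMono φ ∧
        Tendsto (fun n => δ (u (φ n)) x) atTop (𝓝 0)) ∧
    (∀ u : ℕ → X, (∀ C : Set X, IsCompact C → ∀ᶠ n in atTop, u n ∉ C) →
        Tendsto (fun n => δ (u n) x₀) atTop (𝓝 0)) :=
  stmt_18_general K hKc hKunion r hrpos hrlim hnbhd x₀ hx₀ g hg h hh δ hδ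
end

section
/- Let X be a noncompact locally compact Polish space, Y a Hausdorff space, and f : X → Y a continuous bijection such that for some x₀ ∈ X every sequence in X converging to infinity has f-image converging to f(x₀). Then Y is metrizable; in fact Y is homeomorphic to the compact metric space (X,δ) for the explicitly constructed metric δ(x,y) = min(d(x,y), h(x)+h(y)), and hence Y is a compact Polish space. -/
/-!
Away from `x₀` the function `h` is positive and `δ` agrees with `d` on balls of radius `h`;
at `x₀` one has `δ(x, x₀) = h x`, as `h` is 1-Lipschitz and vanishes only at `x₀`.
Since `g ≤ r (m + 1)` off `K (m + 1)`, `h` tends to `0` at infinity, so every `δ`-ball around `x₀`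
contains the complement of a compact set, whence `(X, δ)` is compact. Conversely, as `h` is
bounded below on compact sets avoiding `x₀`, a set containing a `d`-neighbourhood of `x₀` and the
complement of a compact set is a `δ`-neighbourhood of `x₀`; so `f`, which tends to `f x₀` at
infinity, is continuous on `(X, δ)`, and a continuous bijection from a compact space onto a
Hausdorff space is a homeomorphism.
-/

open Filter Topology Metric Set

theorem compactSpace_of_cocompact_le_nhds {Z : Type*} [TopologicalSpace Z] {z : Z}
    (hz : cocompact Z ≤ 𝓝 z) : CompactSpace Z := by
  refine ⟨isCompact_iff_ultrafilter_le_nhds'.2 fun F _ => ?_⟩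
  by_cases hFz : ↑F ≤ 𝓝 z
  · exact ⟨z, mem_univ z, hFz⟩
  obtain ⟨U, hU, hUF⟩ := Filter.not_le.1 hFz
  obtain ⟨C, hC, hCU⟩ := mem_cocompact'.1 (hz hU)
  obtain ⟨x, -, hx⟩ := hC.ultrafilter_le_nhds F
    (le_principal_iff.2 (F.mem_of_superset (F.compl_mem_iff_notMem.2 hUF) hCU))
  exact ⟨x, mem_univ x, hx⟩

theorem CompactExhaustion.hasBasis_cocompact {X : Type*} [TopologicalSpace X]
    (K : CompactExhaustion X) : (cocompact X).HasBasis (fun _ => True) fun n => (K n)ᶜ :=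
  Filter.hasBasis_cocompact.to_hasBasis
    (fun _ hC => (K.exists_superset_of_isCompact hC).imp fun _ hn =>
      ⟨trivial, compl_subset_compl.2 hn⟩)
    fun n _ => ⟨K n, K.isCompact n, subset_rfl⟩

theorem le_add_dist_of_isGreatest {X ι : Type*} [PseudoMetricSpace X] {F : ι → X → ℝ}
    {g : X → ℝ} (hF : ∀ i x y, F i x ≤ F i y + dist x y)
    (hg : ∀ x, IsGreatest (range fun i => F i x) (g x)) (x y : X) :
    g x ≤ g y + dist x y := by
  obtain ⟨⟨i, hi⟩, -⟩ := hg x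
  calc g x = F i x := hi.symm
    _ ≤ F i y + dist x y := hF i x y
    _ ≤ g y + dist x y := by gcongr; exact (hg y).2 ⟨i, rfl⟩

namespace CompactExhaustion

variable {X : Type*} [MetricSpace X] (K : CompactExhaustion X) {r : ℕ → ℝ}

theorem sub_infDist_le_of_notMem_succ (hr : Antitone r) (hrpos : ∀ n, 0 < r n)
    (hK : ∀ n, {x | ∃ v ∈ K n, dist x v < r n} ⊆ K (n + 1)) (hK₀ : (K 0).Nonempty)
    {x : X} {m : ℕ} (hx : x ∉ K (m + 1)) (n : ℕ) :
    r n - infDist x (K n) ≤ r (m + 1) := by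
  rcases le_or_gt n m with hnm | hmn
  · have hxn : x ∉ K (n + 1) := fun hxn => hx (K.subset (by omega) hxn)
    have : r n ≤ infDist x (K n) := by
      by_contra! hlt
      exact hxn (hK n ((infDist_lt_iff (hK₀.mono (K.subset n.zero_le))).1 hlt))
    linarith [hrpos (m + 1)]
  · linarith [hr (show m + 1 ≤ n by omega), infDist_nonneg (x := x) (s := K n)]

theorem pos_of_isGreatest {g : X → ℝ} (hrpos : ∀ n, 0 < r n)
    (hg : ∀ x, IsGreatest (range fun n => r n - infDist x (K n)) (g x)) (x : X) : 0 < g x := by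
  obtain ⟨n, hn⟩ := K.exists_mem x
  have : r n - infDist x (K n) ≤ g x := (hg x).2 ⟨n, rfl⟩
  rw [infDist_zero_of_mem hn, sub_zero] at this
  exact (hrpos n).trans_le this

theorem tendsto_cocompact_of_isGreatest {g : X → ℝ} (hr : Antitone r)
    (hrpos : ∀ n, 0 < r n) (hrlim : Tendsto r atTop (𝓝 0))
    (hK : ∀ n, {x | ∃ v ∈ K n, dist x v < r n} ⊆ K (n + 1)) (hK₀ : (K 0).Nonempty)
    (hg : ∀ x, IsGreatest (range fun n => r n - infDist x (K n)) (g x)) :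
    Tendsto g (cocompact X) (𝓝 0) := by
  refine (nhds_basis_Ioo_pos (0 : ℝ)).tendsto_right_iff.2 fun ε hε => ?_
  obtain ⟨m, hm⟩ := (hrlim.eventually (gt_mem_nhds hε)).exists_forall_of_atTop
  refine (K.hasBasis_cocompact.eventually_iff.2 ⟨m + 1, trivial, fun x hx => ⟨?_, ?_⟩⟩)
  · linarith [K.pos_of_isGreatest hrpos hg x]
  · obtain ⟨⟨n, hn : r n - infDist x (K n) = g x⟩, -⟩ := hg x
    linarith [K.sub_infDist_le_of_notMem_succ hr hrpos hK hK₀ hx n, hm (m + 1) (by omega)]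

end CompactExhaustion

structure IsPinching {X : Type*} [MetricSpace X] (h : X → ℝ) (x₀ : X) : Prop where
  nonneg : ∀ x, 0 ≤ h x
  le_add_dist : ∀ x y, h x ≤ h y + dist x y
  eq_zero_iff : ∀ x, h x = 0 ↔ x = x₀

namespace IsPinching

variable {X : Type*} [MetricSpace X] {h : X → ℝ} {x₀ : X}

theorem apply_base (hh : IsPinching h x₀) : h x₀ = 0 := (hh.eq_zero_iff x₀).2 rfl

theorem pos_of_ne (hh : IsPinching h x₀) {x : X} (hx : x ≠ x₀) : 0 < h x :=
  (hh.nonneg x).lt_of_ne' fun h0 => hx ((hh.eq_zero_iff x).1 h0)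

protected theorem continuous (hh : IsPinching h x₀) : Continuous h :=
  (LipschitzWith.of_le_add hh.le_add_dist).continuous

theorem min_dist {g : X → ℝ} (x₀ : X) (hg₀ : ∀ x, 0 < g x)
    (hg : ∀ x y, g x ≤ g y + dist x y) : IsPinching (fun x => min (dist x x₀) (g x)) x₀ where
  nonneg x := le_min dist_nonneg (hg₀ x).le
  le_add_dist x y := by
    rw [← min_add_add_right]
    exact min_le_min ((dist_triangle x y x₀).trans_eq (add_comm _ _)) (hg x y)
  eq_zero_iff x := by
    refine ⟨fun h0 => ?_, fun hx => by simp [hx, (hg₀ x₀).le]⟩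
    rcases min_choice (dist x x₀) (g x) with hmin | hmin <;> rw [hmin] at h0
    · exact dist_eq_zero.1 h0
    · exact absurd h0 (hg₀ x).ne'

end IsPinching

/-- `X` with the metric `δ(x, y) = min (dist x y) (h x + h y)` of an `IsPinching h x₀`,
which glues the end of `X` to `x₀`. -/
def Pinched {X : Type*} (_h : X → ℝ) (_x₀ : X) : Type _ := X

namespace Pinched

variable {X : Type*} {h : X → ℝ} {x₀ : X}

def mk (x : X) : Pinched h x₀ := x

def down (p : Pinched h x₀) : X := p

variable [MetricSpace X] [Fact (IsPinching h x₀)]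

instance : MetricSpace (Pinched h x₀) where
  dist p q := min (dist p.down q.down) (h p.down + h q.down)
  dist_self p := by
    have hh : IsPinching h x₀ := Fact.out
    rw [dist_self]
    exact min_eq_left (add_nonneg (hh.nonneg _) (hh.nonneg _))
  dist_comm p q := by simp only [dist_comm, add_comm]
  dist_triangle p q s := by
    have hh : IsPinching h x₀ := Fact.out
    have hps := min_le_right (dist p.down s.down) (h p.down + h s.down)
    rcases min_choice (dist p.down q.down) (h p.down + h q.down) with hpq | hpq <;>
      rcases min_choice (dist q.down s.down) (h q.down + h s.down) with hqs | hqs <;>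
      rw [hpq, hqs]
    · exact (min_le_left _ _).trans (dist_triangle _ _ _)
    · linarith [hh.le_add_dist p.down q.down]
    · linarith [hh.le_add_dist s.down q.down, dist_comm s.down q.down]
    · linarith [hh.nonneg q.down]
  eq_of_dist_eq_zero {p q} hpq := by
    have hh : IsPinching h x₀ := Fact.out
    show p.down = q.down
    rcases min_choice (dist p.down q.down) (h p.down + h q.down) with hmin | hmin <;>
      rw [hmin] at hpq
    · exact dist_eq_zero.1 hpq
    · have hp := hh.nonneg p.down
      have hq := hh.nonneg q.down
      rw [(hh.eq_zero_iff p.down).1 (by linarith), (hh.eq_zero_iff q.down).1 (by linarith)]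

theorem dist_def (p q : Pinched h x₀) :
    dist p q = min (dist p.down q.down) (h p.down + h q.down) := rfl

theorem dist_le_add (p q : Pinched h x₀) : dist p q ≤ h p.down + h q.down :=
  min_le_right _ _

theorem lipschitzWith_mk : LipschitzWith 1 (mk : X → Pinched h x₀) :=
  LipschitzWith.mk_one fun _ _ => min_le_left _ _

theorem dist_eq_of_down_eq {p q : Pinched h x₀} (hq : q.down = x₀) : dist p q = h p.down := by
  have hh : IsPinching h x₀ := Fact.out
  rw [dist_def, hq, hh.apply_base, add_zero]
  exact min_eq_right ((hh.le_add_dist _ _).trans_eq (by rw [hh.apply_base, zero_add]))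

theorem dist_eq_dist_down_of_lt {p q : Pinched h x₀} (hpq : dist p q < h q.down) :
    dist p q = dist p.down q.down := by
  have hh : IsPinching h x₀ := Fact.out
  rw [dist_def] at hpq ⊢
  refine min_eq_left (le_of_lt ?_)
  by_contra! hle
  rw [min_eq_right hle] at hpq
  linarith [hh.nonneg p.down]

theorem tendsto_down_of_pos {q : Pinched h x₀} (hq : 0 < h q.down) :
    Tendsto down (𝓝 q) (𝓝 q.down) := by
  refine tendsto_nhds_nhds.2 fun ε hε => ⟨min ε (h q.down), lt_min hε hq, fun p hp => ?_⟩
  rw [← dist_eq_dist_down_of_lt (hp.trans_le (min_le_right _ _))]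
  exact hp.trans_le (min_le_left _ _)

theorem tendsto_down_of_down_eq {q : Pinched h x₀} (hq : q.down = x₀) :
    Tendsto down (𝓝 q) (𝓝 x₀ ⊔ cocompact X) := by
  have hh : IsPinching h x₀ := Fact.out
  intro S hS
  obtain ⟨ε, hε, hεS⟩ := Metric.mem_nhds_iff.1 (mem_sup.1 hS).1
  obtain ⟨C, hC, hCS⟩ := mem_cocompact.1 (mem_sup.1 hS).2
  have hpos : ∀ x ∈ C \ ball x₀ ε, 0 < h x := fun x hx =>
    hh.pos_of_ne fun hx₀ => hx.2 (hx₀ ▸ mem_ball_self hε)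
  obtain ⟨η, hη, hηC⟩ := (hC.diff isOpen_ball).exists_forall_le' hh.continuous.continuousOn hpos
  refine Metric.mem_nhds_iff.2 ⟨η, hη, fun p hp => ?_⟩
  rw [mem_ball, dist_eq_of_down_eq hq] at hp
  by_cases hpC : p.down ∈ C
  · by_contra hpS
    exact hp.not_ge (hηC _ ⟨hpC, fun hpε => hpS (hεS hpε)⟩)
  · exact hCS hpC

theorem compactSpace (hinf : Tendsto h (cocompact X) (𝓝 0)) :
    CompactSpace (Pinched h x₀) := by
  refine compactSpace_of_cocompact_le_nhds (z := mk x₀) (nhds_basis_ball.ge_iff.2 fun η hη => ?_)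
  obtain ⟨C, hC, hCη⟩ := mem_cocompact.1 (hinf (Iio_mem_nhds hη))
  refine mem_cocompact.2 ⟨mk '' C, hC.image lipschitzWith_mk.continuous, fun p hp => ?_⟩
  rw [mem_ball, dist_eq_of_down_eq rfl]
  exact hCη fun hpC => hp ⟨p.down, hpC, rfl⟩

theorem continuous_comp_down {Z : Type*} [TopologicalSpace Z] {f : X → Z} (hf : Continuous f)
    (hf₀ : Tendsto f (cocompact X) (𝓝 (f x₀))) : Continuous (f ∘ down : Pinched h x₀ → Z) := by
  have hh : IsPinching h x₀ := Fact.out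
  refine continuous_iff_continuousAt.2 fun q => ?_
  by_cases hq : q.down = x₀
  · rw [ContinuousAt, Function.comp_apply, hq]
    exact ((hf.tendsto x₀).sup hf₀).comp (tendsto_down_of_down_eq hq)
  · exact (hf.tendsto _).comp (tendsto_down_of_pos (hh.pos_of_ne hq))

end Pinched

theorem stmt_19_general {X Y : Type*} [MetricSpace X]
    [TopologicalSpace Y] [T2Space Y]
    (f : X → Y) (hf : Continuous f) (hbij : Function.Bijective f)
    (x₀ : X)
    (hx₀ : ∀ u : ℕ → X, (∀ C : Set X, IsCompact C → ∀ᶠ n in atTop, u n ∉ C) →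
      Tendsto (fun n => f (u n)) atTop (𝓝 (f x₀)))
    (K : ℕ → Set X) (hKc : ∀ n, IsCompact (K n))
    (hKmono : ∀ n, K n ⊆ interior (K (n + 1))) (hKunion : (⋃ n, K n) = Set.univ)
    (r : ℕ → ℝ) (hr : StrictAnti r) (hrpos : ∀ n, 0 < r n)
    (hrlim : Tendsto r atTop (𝓝 0))
    (hnbhd : ∀ n, {x : X | ∃ v ∈ K n, dist x v < r n} ⊆ K (n + 1))
    (hx₀K : x₀ ∈ K 0)
    (g : X → ℝ)
    (hg : ∀ x : X, ∃ n : ℕ, g x = r n - Metric.infDist x (K n) ∧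
      ∀ m : ℕ, r m - Metric.infDist x (K m) ≤ g x)
    (h : X → ℝ) (hh : ∀ x, h x = min (dist x x₀) (g x)) :
    TopologicalSpace.MetrizableSpace Y ∧ CompactSpace Y ∧ PolishSpace Y ∧
      ∃ m : MetricSpace X,
        (∀ x y : X, m.dist x y = min (dist x y) (h x + h y)) ∧
        @CompactSpace X m.toUniformSpace.toTopologicalSpace ∧
        Nonempty (@Homeomorph Y X _ m.toUniformSpace.toTopologicalSpace) := by
  let 𝒦 : CompactExhaustion X := ⟨K, hKc, hKmono, hKunion⟩
  have hg' : ∀ x, IsGreatest (range fun n => r n - infDist x (K n)) (g x) := fun x =>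
    let ⟨n, hn, hle⟩ := hg x
    ⟨⟨n, hn.symm⟩, forall_mem_range.2 hle⟩
  have hF : ∀ n x y, r n - infDist x (K n) ≤ r n - infDist y (K n) + dist x y := fun n x y => by
    linarith [infDist_le_infDist_add_dist (x := y) (y := x) (s := K n), dist_comm x y]
  have hpinch : IsPinching h x₀ := funext hh ▸
    IsPinching.min_dist x₀ (𝒦.pos_of_isGreatest hrpos hg') (le_add_dist_of_isGreatest hF hg')
  have : Fact (IsPinching h x₀) := ⟨hpinch⟩
  have hcompact : CompactSpace (Pinched h x₀) := Pinched.compactSpace <|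
    squeeze_zero hpinch.nonneg (fun x => (hh x).trans_le (min_le_right _ _))
      (𝒦.tendsto_cocompact_of_isGreatest hr.antitone hrpos hrlim hnbhd ⟨x₀, hx₀K⟩ hg')
  have hf₀ : Tendsto f (cocompact X) (𝓝 (f x₀)) := by
    have := 𝒦.hasBasis_cocompact.isCountablyGenerated
    exact tendsto_iff_seq_tendsto.2 fun u hu => hx₀ u (hasBasis_cocompact.tendsto_right_iff.1 hu)
  let E : Pinched h x₀ ≃ₜ Y := (Pinched.continuous_comp_down hf hf₀).homeoOfEquivCompactToT2
    (f := Equiv.ofBijective _ hbij)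
  exact ⟨E.symm.isEmbedding.metrizableSpace, E.compactSpace, E.symm.isClosedEmbedding.polishSpace,
    (inferInstance : MetricSpace (Pinched h x₀)),
    fun x y => (min_eq_left (Pinched.dist_le_add x y)).symm, hcompact, ⟨E.symm⟩⟩

theorem stmt_19 {X Y : Type*} [MetricSpace X] [CompleteSpace X]
    [TopologicalSpace.SeparableSpace X] [LocallyCompactSpace X] [NoncompactSpace X]
    [TopologicalSpace Y] [T2Space Y]
    (f : X → Y) (hf : Continuous f) (hbij : Function.Bijective f)
    (x₀ : X)
    (hx₀ : ∀ u : ℕ → X, (∀ C : Set X, IsCompact C → ∀ᶠ n in atTop, u n ∉ C) →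
      Tendsto (fun n => f (u n)) atTop (𝓝 (f x₀)))
    (K : ℕ → Set X) (hKc : ∀ n, IsCompact (K n))
    (hKmono : ∀ n, K n ⊆ interior (K (n + 1))) (hKunion : (⋃ n, K n) = Set.univ)
    (r : ℕ → ℝ) (hr : StrictAnti r) (hrpos : ∀ n, 0 < r n)
    (hrlim : Tendsto r atTop (𝓝 0))
    (hnbhd : ∀ n, {x : X | ∃ v ∈ K n, dist x v < r n} ⊆ K (n + 1))
    (hx₀K : x₀ ∈ K 0)
    (g : X → ℝ)
    (hg : ∀ x : X, ∃ n : ℕ, g x = r n - Metric.infDist x (K n) ∧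
      ∀ m : ℕ, r m - Metric.infDist x (K m) ≤ g x)
    (h : X → ℝ) (hh : ∀ x, h x = min (dist x x₀) (g x)) :
    TopologicalSpace.MetrizableSpace Y ∧ CompactSpace Y ∧ PolishSpace Y ∧
      ∃ m : MetricSpace X,
        (∀ x y : X, m.dist x y = min (dist x y) (h x + h y)) ∧
        @CompactSpace X m.toUniformSpace.toTopologicalSpace ∧
        Nonempty (@Homeomorph Y X _ m.toUniformSpace.toTopologicalSpace) :=
  stmt_19_general f hf hbij x₀ hx₀ K hKc hKmono hKunion r hr hrpos hrlim hnbhd hx₀K g hg h hh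
end
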